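/- arXiv:1908.00700 — 5 statements merged into one kernel-verified Lean document; each statement's English description precedes it below -/
import Mathlib

section
/- Let d ≥ 1, β₁ ∈ [0,1), ε > 0, η > 0, and let (x_t), (m_t), (v_t), (g_t) be sequences in ℝ^d with v_t having nonnegative coordinates for all t ≥ 0, m₀ = 0, x₀ = x₁, and for all t ≥ 1: m_t = β₁·m_{t−1} + (1−β₁)·g_t and x_{t+1} = x_t − η·(√v_t + ε)^{−1} ⊙ m_t (all operations element-wise). Define z_t = x_t + (β₁/(1−β₁))·(x_t − x_{t−1}). Then for every t ≥ 1: z_{t+1} = z_t + (η·β₁/(1−β₁))·((√v_{t−1} + ε)^{−1} − (√v_t + ε)^{−1}) ⊙ m_{t−1} − η·(√v_t + ε)^{−1} ⊙ g_t. (Auxiliary-sequence update identity for Adam.) -/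
/-!
Since `z t = x t + β/(1-β) (x t - x (t-1))`,
`z (t+1) - z t = (x (t+1) - x t)/(1-β) - β/(1-β) (x t - x (t-1))`. Both increments have the form
`x (s+1) - x s = -η a s m s` (for `s = 0` because `x 0 = x 1` and `m 0 = 0`), so this is
`-η/(1-β) a t m t + ηβ/(1-β) a (t-1) m (t-1)`, and splitting `m t = β m (t-1) + (1-β) g t`
gives the identity.
-/

section ScalarAdam

variable {𝕜 : Type*} [Field 𝕜] {β η : 𝕜} {x m g a : ℕ → 𝕜}

theorem adam_increment_eq (hm0 : m 0 = 0) (hx0 : x 0 = x 1)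
    (hx : ∀ t, 1 ≤ t → x (t + 1) = x t - η * a t * m t) {t : ℕ} (ht : 1 ≤ t) :
    x t - x (t - 1) = -(η * a (t - 1) * m (t - 1)) := by
  obtain ⟨s, rfl⟩ := Nat.exists_eq_add_of_le' ht
  rcases Nat.eq_zero_or_pos s with rfl | hs
  · simp [← hx0, hm0]
  · rw [Nat.add_sub_cancel, hx s hs]
    ring

theorem adam_auxiliary_update (hβ : β ≠ 1) (hm0 : m 0 = 0) (hx0 : x 0 = x 1)
    (hm : ∀ t, 1 ≤ t → m t = β * m (t - 1) + (1 - β) * g t)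
    (hx : ∀ t, 1 ≤ t → x (t + 1) = x t - η * a t * m t) {t : ℕ} (ht : 1 ≤ t) :
    x (t + 1) + β / (1 - β) * (x (t + 1) - x t)
      = x t + β / (1 - β) * (x t - x (t - 1))
        + η * β / (1 - β) * ((a (t - 1) - a t) * m (t - 1)) - η * a t * g t := by
  have hβ' : 1 - β ≠ 0 := sub_ne_zero.mpr hβ.symm
  rw [adam_increment_eq hm0 hx0 hx ht, hx t ht, hm t ht]
  field_simp
  ring

end ScalarAdam

theorem adam_auxiliary_sequence_update_general
    {d : ℕ} (β₁ ε η : ℝ) (hβ₁1 : β₁ < 1)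
    (x m v g : ℕ → EuclideanSpace ℝ (Fin d))
    (hm0 : m 0 = 0) (hx0 : x 0 = x 1)
    (hm : ∀ t, 1 ≤ t → m t = β₁ • m (t - 1) + (1 - β₁) • g t)
    (hx : ∀ t, 1 ≤ t → ∀ j, x (t + 1) j = x t j - η * (Real.sqrt (v t j) + ε)⁻¹ * m t j)
    (z : ℕ → EuclideanSpace ℝ (Fin d))
    (hz : ∀ t, z t = x t + (β₁ / (1 - β₁)) • (x t - x (t - 1))) :
    ∀ t, 1 ≤ t → ∀ j : Fin d,
      z (t + 1) j = z t j
        + (η * β₁ / (1 - β₁)) *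
            (((Real.sqrt (v (t - 1) j) + ε)⁻¹ - (Real.sqrt (v t j) + ε)⁻¹) * m (t - 1) j)
        - η * (Real.sqrt (v t j) + ε)⁻¹ * g t j := by
  intro t ht j
  have hzj : ∀ s, z s j = x s j + β₁ / (1 - β₁) * (x s j - x (s - 1) j) := fun s => by
    simp [hz]
  have hmj : ∀ s, 1 ≤ s → m s j = β₁ * m (s - 1) j + (1 - β₁) * g s j := fun s hs => by
    simp [hm s hs]
  rw [hzj, hzj]
  exact adam_auxiliary_update (x := fun s => x s j) (a := fun s => (Real.sqrt (v s j) + ε)⁻¹)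
    hβ₁1.ne (by simp [hm0]) (by rw [hx0]) hmj (fun s hs => hx s hs j) ht

/-- **Auxiliary-sequence update identity for Adam.**
Let `d ≥ 1`, `β₁ ∈ [0,1)`, `ε > 0`, `η > 0` and let `(x t)`, `(m t)`, `(v t)`, `(g t)` be
sequences in `ℝ^d` with `v t` having nonnegative coordinates, `m 0 = 0`, `x 0 = x 1`, and for
`t ≥ 1`: `m t = β₁ • m (t-1) + (1-β₁) • g t` and
`x (t+1) = x t − η • (√(v t) + ε)⁻¹ ⊙ m t` (element-wise).  With
`z t = x t + (β₁/(1-β₁)) • (x t − x (t-1))`, for every `t ≥ 1` and coordinate `j`: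
`z (t+1) j = z t j + (η β₁/(1-β₁)) ((√(v (t-1) j)+ε)⁻¹ − (√(v t j)+ε)⁻¹) m (t-1) j
  − η (√(v t j)+ε)⁻¹ g t j`. -/
theorem adam_auxiliary_sequence_update
    {d : ℕ} (hd : 1 ≤ d) (β₁ ε η : ℝ) (hβ₁0 : 0 ≤ β₁) (hβ₁1 : β₁ < 1) (hε : 0 < ε) (hη : 0 < η)
    (x m v g : ℕ → EuclideanSpace ℝ (Fin d))
    (hvpos : ∀ t j, 0 ≤ v t j)
    (hm0 : m 0 = 0) (hx0 : x 0 = x 1)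
    (hm : ∀ t, 1 ≤ t → m t = β₁ • m (t - 1) + (1 - β₁) • g t)
    (hx : ∀ t, 1 ≤ t → ∀ j, x (t + 1) j = x t j - η * (Real.sqrt (v t j) + ε)⁻¹ * m t j)
    (z : ℕ → EuclideanSpace ℝ (Fin d))
    (hz : ∀ t, z t = x t + (β₁ / (1 - β₁)) • (x t - x (t - 1))) :
    ∀ t, 1 ≤ t → ∀ j : Fin d,
      z (t + 1) j = z t j
        + (η * β₁ / (1 - β₁)) *
            (((Real.sqrt (v (t - 1) j) + ε)⁻¹ - (Real.sqrt (v t j) + ε)⁻¹) * m (t - 1) j)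
        - η * (Real.sqrt (v t j) + ε)⁻¹ * g t j :=
  adam_auxiliary_sequence_update_general β₁ ε η hβ₁1 x m v g hm0 hx0 hm hx z hz
end

section
/- Under the Adam-type setup, define z_t = x_t + (β₁/(1−β₁))·(x_t − x_{t−1}). Then for every t ≥ 1: E[‖z_{t+1} − z_t‖²] ≤ (2η²β₁²(σ²+G²)/(1−β₁)²)·E[Σ_{j=1}^d ((√(v_{t−1,j}) + ε)^{−2} − (√(v_{t,j}) + ε)^{−2})] + 2η²μ₂²(σ²+G²). (Bound on the squared displacement of the auxiliary sequence for Adam.) -/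
open MeasureTheory
open scoped RealInnerProductSpace

private lemma euclid_norm_sq {d : ℕ} (w : EuclideanSpace ℝ (Fin d)) :
    ‖w‖ ^ 2 = ∑ j, (w j) ^ 2 := by
  rw [EuclideanSpace.norm_eq, Real.sq_sqrt (by positivity)]
  simp [Real.norm_eq_abs, sq_abs]

private lemma sub_sq_le (p q : ℝ) : (p - q) ^ 2 ≤ 2 * p ^ 2 + 2 * q ^ 2 := by
  nlinarith [sq_nonneg (p + q)]

private lemma euclid_coord_le {d : ℕ} (w : EuclideanSpace ℝ (Fin d)) (j : Fin d) :
    |w j| ≤ ‖w‖ := by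
  have h2 : (w j) ^ 2 ≤ ‖w‖ ^ 2 := by
    rw [euclid_norm_sq w]
    exact Finset.single_le_sum (f := fun i => (w i) ^ 2) (fun i _ => sq_nonneg _) (Finset.mem_univ j)
  calc |w j| = Real.sqrt ((w j) ^ 2) := (Real.sqrt_sq_eq_abs _).symm
    _ ≤ Real.sqrt (‖w‖ ^ 2) := Real.sqrt_le_sqrt h2
    _ = ‖w‖ := Real.sqrt_sq (norm_nonneg _)

set_option maxHeartbeats 1000000

/-- **Bound on the squared displacement of the auxiliary sequence for Adam.**
Under the Adam-type setup, with `z t = x t + (β₁/(1-β₁)) • (x t − x (t-1))` and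
`μ₂ = 1/ε`, for every `t ≥ 1`:
`E[‖z (t+1) − z t‖²] ≤ (2η²β₁²(σ²+G²)/(1−β₁)²) ·
  E[Σ_j ((√(v (t-1) j)+ε)⁻² − (√(v t j)+ε)⁻²)] + 2η²μ₂²(σ²+G²)`. -/
theorem adam_auxiliary_displacement_bound
    {Ω : Type*} [MeasureSpace Ω] [MeasureTheory.IsProbabilityMeasure (volume : Measure Ω)]
    {d : ℕ} (hd : 1 ≤ d)
    (𝓕 : ℕ → MeasurableSpace Ω) (h𝓕mono : Monotone 𝓕)
    (h𝓕le : ∀ t, 𝓕 t ≤ (inferInstance : MeasurableSpace Ω))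
    (f : EuclideanSpace ℝ (Fin d) → ℝ) (L G σ ε η β₁ fstar : ℝ)
    (hf : Differentiable ℝ f)
    (hLip : ∀ a b : EuclideanSpace ℝ (Fin d), ‖gradient f a - gradient f b‖ ≤ L * ‖a - b‖)
    (hGrad : ∀ a : EuclideanSpace ℝ (Fin d), ‖gradient f a‖ ≤ G)
    (hfstar_le : ∀ a, fstar ≤ f a) (hfstar_attained : ∃ a, f a = fstar)
    (hε : 0 < ε) (hη : 0 < η) (hβ₁0 : 0 ≤ β₁) (hβ₁1 : β₁ < 1)
    (x m v g : ℕ → Ω → EuclideanSpace ℝ (Fin d))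
    (x₁ : EuclideanSpace ℝ (Fin d))
    (hx1 : ∀ ω, x 1 ω = x₁) (hx0 : x 0 = x 1) (hm0 : ∀ ω, m 0 ω = 0)
    (hm : ∀ t, 1 ≤ t → ∀ ω, m t ω = β₁ • m (t - 1) ω + (1 - β₁) • g t ω)
    (hx : ∀ t, 1 ≤ t → ∀ ω (j : Fin d),
      x (t + 1) ω j = x t ω j - η * (Real.sqrt (v t ω j) + ε)⁻¹ * m t ω j)
    (hg_meas : ∀ t, Measurable[𝓕 t] (g t)) (hv_meas : ∀ t, Measurable[𝓕 t] (v t))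
    (hx_meas : ∀ t, 1 ≤ t → Measurable[𝓕 (t - 1)] (x t))
    (hcond : ∀ t, 1 ≤ t →
      MeasureTheory.condExp (𝓕 (t - 1)) volume (g t) =ᵐ[volume] fun ω => gradient f (x t ω))
    (hvar : ∀ t, 1 ≤ t → (∫ ω, ‖g t ω - gradient f (x t ω)‖ ^ 2) ≤ σ ^ 2)
    (hgb : ∀ t, 1 ≤ t → ∀ᵐ ω ∂volume, ‖g t ω‖ ^ 2 ≤ σ ^ 2 + G ^ 2)
    (hv0 : ∀ ω (j : Fin d), v 0 ω j = 0)
    (hvb : ∀ t, 1 ≤ t → ∀ᵐ ω ∂volume, ∀ j : Fin d,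
      0 ≤ v (t - 1) ω j ∧ v (t - 1) ω j ≤ v t ω j ∧ v t ω j ≤ σ ^ 2 + G ^ 2)
    (z : ℕ → Ω → EuclideanSpace ℝ (Fin d))
    (hz : ∀ t ω, z t ω = x t ω + (β₁ / (1 - β₁)) • (x t ω - x (t - 1) ω)) :
    ∀ t, 1 ≤ t →
      (∫ ω, ‖z (t + 1) ω - z t ω‖ ^ 2) ≤
        (2 * η ^ 2 * β₁ ^ 2 * (σ ^ 2 + G ^ 2) / (1 - β₁) ^ 2) *
            (∫ ω, ∑ j : Fin d,
              (((Real.sqrt (v (t - 1) ω j) + ε)⁻¹) ^ 2 - ((Real.sqrt (v t ω j) + ε)⁻¹) ^ 2))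
        + 2 * η ^ 2 * (ε⁻¹) ^ 2 * (σ ^ 2 + G ^ 2) := by
  intro t ht
  have h1β : 0 < 1 - β₁ := by linarith
  set K : ℝ := σ ^ 2 + G ^ 2 with hKdef
  have hK : 0 ≤ K := by positivity
  set c1 : ℝ := 2 * η ^ 2 * β₁ ^ 2 * K / (1 - β₁) ^ 2 with hc1def
  have hc1 : 0 ≤ c1 := by positivity
  set c2 : ℝ := 2 * η ^ 2 * (ε⁻¹) ^ 2 * K with hc2def
  have hc2 : 0 ≤ c2 := by positivity
  set S : Ω → ℝ := fun ω => ∑ j : Fin d,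
      (((Real.sqrt (v (t - 1) ω j) + ε)⁻¹) ^ 2 - ((Real.sqrt (v t ω j) + ε)⁻¹) ^ 2)
    with hSdef
  -- a.e. facts
  have hgall : ∀ᵐ ω ∂volume, ∀ s : ℕ, 1 ≤ s → ‖g s ω‖ ^ 2 ≤ K := by
    rw [MeasureTheory.ae_all_iff]
    intro s
    by_cases hs : 1 ≤ s
    · filter_upwards [hgb s hs] with ω h _
      exact h
    · filter_upwards with ω h
      exact absurd h hs
  have hvA : ∀ᵐ ω ∂volume, ∀ j : Fin d, v (t - 1) ω j ≤ v t ω j := by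
    filter_upwards [hvb t ht] with ω h j
    exact (h j).2.1
  -- key pointwise bound
  have key : ∀ᵐ ω ∂volume, ‖z (t + 1) ω - z t ω‖ ^ 2 ≤ c1 * S ω + c2 := by
    filter_upwards [hgall, hvA] with ω hgω hvω
    -- coordinatewise bound on m
    have hmb : ∀ s : ℕ, ∀ j : Fin d, |m s ω j| ≤ Real.sqrt K := by
      intro s
      induction s with
      | zero =>
        intro j
        rw [hm0 ω]
        simp [Real.sqrt_nonneg]
      | succ n ih =>
        intro j
        have hg1 : |g (n + 1) ω j| ≤ Real.sqrt K := by
          have h1 : ‖g (n + 1) ω‖ ^ 2 ≤ K := hgω (n + 1) (by omega)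
          have h3 : ‖g (n + 1) ω‖ ≤ Real.sqrt K := by
            rw [← Real.sqrt_sq (norm_nonneg _)]
            exact Real.sqrt_le_sqrt h1
          exact (euclid_coord_le _ _).trans h3
        have hrw : m (n + 1) ω j = β₁ * m n ω j + (1 - β₁) * g (n + 1) ω j := by
          rw [hm (n + 1) (by omega) ω]
          simp [PiLp.add_apply, PiLp.smul_apply, smul_eq_mul]
        rw [hrw]
        calc |β₁ * m n ω j + (1 - β₁) * g (n + 1) ω j|
            ≤ |β₁ * m n ω j| + |(1 - β₁) * g (n + 1) ω j| := abs_add_le _ _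
          _ = β₁ * |m n ω j| + (1 - β₁) * |g (n + 1) ω j| := by
              rw [abs_mul, abs_mul, abs_of_nonneg hβ₁0, abs_of_nonneg h1β.le]
          _ ≤ β₁ * Real.sqrt K + (1 - β₁) * Real.sqrt K :=
              add_le_add (mul_le_mul_of_nonneg_left (ih j) hβ₁0)
                (mul_le_mul_of_nonneg_left hg1 h1β.le)
          _ = Real.sqrt K := by ring
    have hε' : ∀ (s : ℕ) (j : Fin d), 0 < Real.sqrt (v s ω j) + ε := by
      intro s j
      have := Real.sqrt_nonneg (v s ω j)
      linarith
    have hBA : ∀ j : Fin d,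
        (Real.sqrt (v t ω j) + ε)⁻¹ ≤ (Real.sqrt (v (t - 1) ω j) + ε)⁻¹ := by
      intro j
      apply inv_anti₀ (hε' _ _)
      have := Real.sqrt_le_sqrt (hvω j)
      linarith
    have hAμ : ∀ (s : ℕ) (j : Fin d), (Real.sqrt (v s ω j) + ε)⁻¹ ≤ ε⁻¹ := by
      intro s j
      apply inv_anti₀ hε
      have := Real.sqrt_nonneg (v s ω j)
      linarith
    -- x-step formula, valid also at t = 1
    have hxdiff : ∀ j : Fin d, x t ω j - x (t - 1) ω j
        = -(η * (Real.sqrt (v (t - 1) ω j) + ε)⁻¹ * m (t - 1) ω j) := by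
      intro j
      rcases Nat.lt_or_ge t 2 with h2 | h2
      · have ht1 : t = 1 := by omega
        subst ht1
        have hx01 : x 0 ω j = x 1 ω j := by rw [hx0]
        have hm0j : m 0 ω j = 0 := by rw [hm0 ω]; rfl
        simp [hx01, hm0j]
      · have h := hx (t - 1) (by omega) ω j
        rw [Nat.sub_add_cancel (by omega)] at h
        rw [h]; ring
    -- coordinate formula for z-step
    have hzc : ∀ j : Fin d, z (t + 1) ω j - z t ω j =
        η * (β₁ / (1 - β₁)) *
            ((Real.sqrt (v (t - 1) ω j) + ε)⁻¹ - (Real.sqrt (v t ω j) + ε)⁻¹) * m (t - 1) ω j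
          - η * (Real.sqrt (v t ω j) + ε)⁻¹ * g t ω j := by
      intro j
      have hmt : m t ω j = β₁ * m (t - 1) ω j + (1 - β₁) * g t ω j := by
        rw [hm t ht ω]
        simp [PiLp.add_apply, PiLp.smul_apply, smul_eq_mul]
      have hxt : x (t + 1) ω j - x t ω j
          = -(η * (Real.sqrt (v t ω j) + ε)⁻¹ * m t ω j) := by
        rw [hx t ht ω j]; ring
      have e1 : z (t + 1) ω j
          = x (t + 1) ω j + (β₁ / (1 - β₁)) * (x (t + 1) ω j - x t ω j) := by
        rw [hz (t + 1) ω]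
        simp [PiLp.add_apply, PiLp.smul_apply, PiLp.sub_apply, smul_eq_mul,
          Nat.add_sub_cancel]
      have e2 : z t ω j
          = x t ω j + (β₁ / (1 - β₁)) * (x t ω j - x (t - 1) ω j) := by
        rw [hz t ω]
        simp [PiLp.add_apply, PiLp.smul_apply, PiLp.sub_apply, smul_eq_mul]
      rw [e1, e2]
      have expand : x (t + 1) ω j + (β₁ / (1 - β₁)) * (x (t + 1) ω j - x t ω j)
            - (x t ω j + (β₁ / (1 - β₁)) * (x t ω j - x (t - 1) ω j))
          = (1 + β₁ / (1 - β₁)) * (x (t + 1) ω j - x t ω j)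
            - (β₁ / (1 - β₁)) * (x t ω j - x (t - 1) ω j) := by ring
      rw [expand, hxt, hxdiff j, hmt]
      field_simp
      ring
    -- per-coordinate squared bound
    have hcoord : ∀ j : Fin d, (z (t + 1) ω j - z t ω j) ^ 2 ≤
        c1 * (((Real.sqrt (v (t - 1) ω j) + ε)⁻¹) ^ 2 - ((Real.sqrt (v t ω j) + ε)⁻¹) ^ 2)
          + 2 * η ^ 2 * (ε⁻¹) ^ 2 * (g t ω j) ^ 2 := by
      intro j
      rw [hzc j]
      set A : ℝ := (Real.sqrt (v (t - 1) ω j) + ε)⁻¹ with hA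
      set B : ℝ := (Real.sqrt (v t ω j) + ε)⁻¹ with hB
      set M : ℝ := m (t - 1) ω j with hM
      set Gj : ℝ := g t ω j with hGj
      have hB0 : 0 < B := by rw [hB]; exact inv_pos.mpr (hε' _ _)
      have hBA' : B ≤ A := hBA j
      have hBμ : B ≤ ε⁻¹ := hAμ t j
      have hMK : M ^ 2 ≤ K := by
        have h1 := hmb (t - 1) j
        have h2 : Real.sqrt K ^ 2 = K := Real.sq_sqrt hK
        nlinarith [abs_nonneg M, sq_abs M]
      have hsq : B ^ 2 ≤ A ^ 2 := pow_le_pow_left₀ hB0.le hBA' 2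
      have hdiff2 : (A - B) ^ 2 * M ^ 2 ≤ (A ^ 2 - B ^ 2) * K := by
        have hBB : B * B ≤ B * A := mul_le_mul_of_nonneg_left hBA' hB0.le
        have h1 : (A - B) ^ 2 ≤ A ^ 2 - B ^ 2 := by nlinarith
        have h2 : 0 ≤ A ^ 2 - B ^ 2 := by linarith
        have h3 : (A - B) ^ 2 * M ^ 2 ≤ (A ^ 2 - B ^ 2) * M ^ 2 :=
          mul_le_mul_of_nonneg_right h1 (sq_nonneg M)
        have h4 : (A ^ 2 - B ^ 2) * M ^ 2 ≤ (A ^ 2 - B ^ 2) * K :=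
          mul_le_mul_of_nonneg_left hMK h2
        linarith
      have hg2 : B ^ 2 * Gj ^ 2 ≤ (ε⁻¹) ^ 2 * Gj ^ 2 :=
        mul_le_mul_of_nonneg_right (pow_le_pow_left₀ hB0.le hBμ 2) (sq_nonneg Gj)
      have hc1eq : c1 = 2 * (η * (β₁ / (1 - β₁))) ^ 2 * K := by
        rw [hc1def, div_eq_mul_inv, ← inv_pow]; ring
      calc (η * (β₁ / (1 - β₁)) * (A - B) * M - η * B * Gj) ^ 2
          ≤ 2 * (η * (β₁ / (1 - β₁)) * (A - B) * M) ^ 2 + 2 * (η * B * Gj) ^ 2 :=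
            sub_sq_le _ _
        _ = 2 * (η * (β₁ / (1 - β₁))) ^ 2 * ((A - B) ^ 2 * M ^ 2)
            + 2 * η ^ 2 * (B ^ 2 * Gj ^ 2) := by ring
        _ ≤ 2 * (η * (β₁ / (1 - β₁))) ^ 2 * ((A ^ 2 - B ^ 2) * K)
            + 2 * η ^ 2 * ((ε⁻¹) ^ 2 * Gj ^ 2) :=
            add_le_add (mul_le_mul_of_nonneg_left hdiff2 (by positivity))
              (mul_le_mul_of_nonneg_left hg2 (by positivity))
        _ = c1 * (A ^ 2 - B ^ 2) + 2 * η ^ 2 * (ε⁻¹) ^ 2 * Gj ^ 2 := by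
            rw [hc1eq]; ring
    -- sum over coordinates
    have hnorm : ‖z (t + 1) ω - z t ω‖ ^ 2 = ∑ j : Fin d, (z (t + 1) ω j - z t ω j) ^ 2 := by
      rw [euclid_norm_sq (z (t + 1) ω - z t ω)]
      simp [PiLp.sub_apply]
    have hgt : ∑ j : Fin d, (g t ω j) ^ 2 ≤ K := by
      have h1 : ‖g t ω‖ ^ 2 ≤ K := hgω t ht
      rw [euclid_norm_sq (g t ω)] at h1
      exact h1
    calc ‖z (t + 1) ω - z t ω‖ ^ 2
        = ∑ j : Fin d, (z (t + 1) ω j - z t ω j) ^ 2 := hnorm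
      _ ≤ ∑ j : Fin d,
            (c1 * (((Real.sqrt (v (t - 1) ω j) + ε)⁻¹) ^ 2 - ((Real.sqrt (v t ω j) + ε)⁻¹) ^ 2)
              + 2 * η ^ 2 * (ε⁻¹) ^ 2 * (g t ω j) ^ 2) :=
          Finset.sum_le_sum (fun j _ => hcoord j)
      _ = c1 * S ω + 2 * η ^ 2 * (ε⁻¹) ^ 2 * ∑ j : Fin d, (g t ω j) ^ 2 := by
          rw [Finset.sum_add_distrib, ← Finset.mul_sum, ← Finset.mul_sum, hSdef]
      _ ≤ c1 * S ω + c2 := by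
          rw [hc2def]
          have : 2 * η ^ 2 * (ε⁻¹) ^ 2 * ∑ j : Fin d, (g t ω j) ^ 2
              ≤ 2 * η ^ 2 * (ε⁻¹) ^ 2 * K :=
            mul_le_mul_of_nonneg_left hgt (by positivity)
          linarith
  -- measurability
  have hxm : ∀ s : ℕ, Measurable (x s) := by
    intro s
    rcases Nat.eq_zero_or_pos s with h | h
    · subst h
      rw [hx0]
      exact (hx_meas 1 le_rfl).mono (h𝓕le _) le_rfl
    · exact (hx_meas s h).mono (h𝓕le _) le_rfl
  have hzm : ∀ s : ℕ, Measurable (z s) := by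
    intro s
    have : z s = fun ω => x s ω + (β₁ / (1 - β₁)) • (x s ω - x (s - 1) ω) :=
      funext (hz s)
    rw [this]
    exact (hxm s).add (((hxm s).sub (hxm (s - 1))).const_smul (β₁ / (1 - β₁)))
  have hφm : Measurable (fun ω => ‖z (t + 1) ω - z t ω‖ ^ 2) :=
    (((hzm (t + 1)).sub (hzm t)).norm).pow_const 2
  have hSm : Measurable S := by
    apply Finset.measurable_sum
    intro j _
    have h1 : Measurable (fun ω => v (t - 1) ω j) :=
      (EuclideanSpace.proj j).continuous.measurable.comp
        ((hv_meas (t - 1)).mono (h𝓕le _) le_rfl)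
    have h2 : Measurable (fun ω => v t ω j) :=
      (EuclideanSpace.proj j).continuous.measurable.comp
        ((hv_meas t).mono (h𝓕le _) le_rfl)
    exact (((h1.sqrt.add_const ε).inv.pow_const 2)).sub
      ((h2.sqrt.add_const ε).inv.pow_const 2)
  -- boundedness and integrability
  have hSbound : ∀ ω, |S ω| ≤ d * (ε⁻¹) ^ 2 := by
    intro ω
    have hterm : ∀ j : Fin d,
        |((Real.sqrt (v (t - 1) ω j) + ε)⁻¹) ^ 2 - ((Real.sqrt (v t ω j) + ε)⁻¹) ^ 2|
          ≤ (ε⁻¹) ^ 2 := by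
      intro j
      have b1 : ∀ s : ℕ, 0 ≤ (Real.sqrt (v s ω j) + ε)⁻¹ ∧
          (Real.sqrt (v s ω j) + ε)⁻¹ ≤ ε⁻¹ := by
        intro s
        have h0 := Real.sqrt_nonneg (v s ω j)
        constructor
        · positivity
        · apply inv_anti₀ hε; linarith
      obtain ⟨p1, p2⟩ := b1 (t - 1)
      obtain ⟨q1, q2⟩ := b1 t
      rw [abs_le]
      constructor <;> nlinarith
    calc |S ω| ≤ ∑ j : Fin d,
          |((Real.sqrt (v (t - 1) ω j) + ε)⁻¹) ^ 2 - ((Real.sqrt (v t ω j) + ε)⁻¹) ^ 2| :=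
        Finset.abs_sum_le_sum_abs _ _
      _ ≤ ∑ _j : Fin d, (ε⁻¹) ^ 2 := Finset.sum_le_sum (fun j _ => hterm j)
      _ = d * (ε⁻¹) ^ 2 := by simp [Finset.sum_const, nsmul_eq_mul]
  have hSint : Integrable S := by
    apply Integrable.mono' (integrable_const ((d : ℝ) * (ε⁻¹) ^ 2))
      hSm.aestronglyMeasurable
    filter_upwards with ω
    simpa using hSbound ω
  have hψint : Integrable (fun ω => c1 * S ω + c2) :=
    (hSint.const_mul c1).add (integrable_const c2)
  have hφint : Integrable (fun ω => ‖z (t + 1) ω - z t ω‖ ^ 2) := by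
    apply Integrable.mono' (integrable_const (c1 * ((d : ℝ) * (ε⁻¹) ^ 2) + c2))
      hφm.aestronglyMeasurable
    filter_upwards [key] with ω hω
    rw [Real.norm_eq_abs, abs_of_nonneg (by positivity)]
    have h2 : c1 * S ω ≤ c1 * ((d : ℝ) * (ε⁻¹) ^ 2) :=
      mul_le_mul_of_nonneg_left ((le_abs_self _).trans (hSbound ω)) hc1
    linarith
  calc (∫ ω, ‖z (t + 1) ω - z t ω‖ ^ 2)
      ≤ ∫ ω, (c1 * S ω + c2) := integral_mono_ae hφint hψint key
    _ = c1 * (∫ ω, S ω) + c2 := by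
        rw [integral_add (hSint.const_mul c1) (integrable_const c2),
          integral_const_mul, integral_const, Measure.real, measure_univ, ENNReal.toReal_one, smul_eq_mul,
          one_mul]
    _ = c1 * (∫ ω, S ω) + c2 := rfl
end

section
/- Under the Sadam-type setup, define z_t = x_t + (β₁/(1−β₁))·(x_t − x_{t−1}). Then for every t ≥ 1: E[‖z_{t+1} − z_t‖²] ≤ (2η²β₁²(σ²+G²)/(1−β₁)²)·E[Σ_{j=1}^d (softplus_β(√(v_{t−1,j}))^{−2} − softplus_β(√(v_{t,j}))^{−2})] + 2η²μ₄²(σ²+G²). (Bound on the squared displacement of the auxiliary sequence for Sadam.) -/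
open MeasureTheory
open scoped RealInnerProductSpace

/-- The softplus activation function with sharpness parameter `β`. -/
noncomputable def softplus (β x : ℝ) : ℝ := β⁻¹ * Real.log (1 + Real.exp (β * x))

lemma softplus_pos {β : ℝ} (hβ : 0 < β) (x : ℝ) : 0 < softplus β x := by
  unfold softplus
  have h : (1:ℝ) < 1 + Real.exp (β * x) := by have := Real.exp_pos (β * x); linarith
  have := Real.log_pos h
  positivity

lemma softplus_mono {β : ℝ} (hβ : 0 < β) {a b : ℝ} (hab : a ≤ b) :
    softplus β a ≤ softplus β b := by
  unfold softplus
  have h1 : (0:ℝ) < 1 + Real.exp (β * a) := by have := Real.exp_pos (β * a); linarith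
  have h2 : Real.log (1 + Real.exp (β * a)) ≤ Real.log (1 + Real.exp (β * b)) :=
    Real.log_le_log h1 (by have := Real.exp_le_exp.2 (mul_le_mul_of_nonneg_left hab hβ.le); linarith)
  exact mul_le_mul_of_nonneg_left h2 (inv_nonneg.2 hβ.le)

lemma softplus_zero {β : ℝ} : softplus β 0 = β⁻¹ * Real.log 2 := by
  unfold softplus; norm_num

lemma inv_softplus_le {β : ℝ} (hβ : 0 < β) {y : ℝ} (hy : 0 ≤ y) :
    (softplus β y)⁻¹ ≤ β / Real.log 2 := by
  have h0 : 0 < softplus β 0 := softplus_pos hβ 0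
  have hle : softplus β 0 ≤ softplus β y := softplus_mono hβ hy
  have h : (softplus β y)⁻¹ ≤ (softplus β 0)⁻¹ := inv_anti₀ h0 hle
  rw [softplus_zero] at h
  calc (softplus β y)⁻¹ ≤ (β⁻¹ * Real.log 2)⁻¹ := h
    _ = β / Real.log 2 := by field_simp

lemma continuous_softplus {β : ℝ} : Continuous (softplus β) := by
  unfold softplus
  fun_prop (disch := intro x; have := Real.exp_pos (β * x); positivity)


set_option maxHeartbeats 1000000 in
/-- **Bound on the squared displacement of the auxiliary sequence for Sadam.**
Under the Sadam-type setup, with `z t = x t + (β₁/(1-β₁)) • (x t − x (t-1))` and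
`μ₄ = β/log 2`, for every `t ≥ 1`:
`E[‖z (t+1) − z t‖²] ≤ (2η²β₁²(σ²+G²)/(1−β₁)²) ·
  E[Σ_j (softplus_β(√(v (t-1) j))⁻² − softplus_β(√(v t j))⁻²)] + 2η²μ₄²(σ²+G²)`. -/
theorem sadam_auxiliary_displacement_bound
    {Ω : Type*} [MeasureSpace Ω] [MeasureTheory.IsProbabilityMeasure (volume : Measure Ω)]
    {d : ℕ} (hd : 1 ≤ d)
    (𝓕 : ℕ → MeasurableSpace Ω) (h𝓕mono : Monotone 𝓕)
    (h𝓕le : ∀ t, 𝓕 t ≤ (inferInstance : MeasurableSpace Ω))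
    (f : EuclideanSpace ℝ (Fin d) → ℝ) (L G σ β η β₁ fstar : ℝ)
    (hf : Differentiable ℝ f)
    (hLip : ∀ a b : EuclideanSpace ℝ (Fin d), ‖gradient f a - gradient f b‖ ≤ L * ‖a - b‖)
    (hGrad : ∀ a : EuclideanSpace ℝ (Fin d), ‖gradient f a‖ ≤ G)
    (hfstar_le : ∀ a, fstar ≤ f a) (hfstar_attained : ∃ a, f a = fstar)
    (hβ : 0 < β) (hη : 0 < η) (hβ₁0 : 0 ≤ β₁) (hβ₁1 : β₁ < 1)
    (x m v g : ℕ → Ω → EuclideanSpace ℝ (Fin d))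
    (x₁ : EuclideanSpace ℝ (Fin d))
    (hx1 : ∀ ω, x 1 ω = x₁) (hx0 : x 0 = x 1) (hm0 : ∀ ω, m 0 ω = 0)
    (hm : ∀ t, 1 ≤ t → ∀ ω, m t ω = β₁ • m (t - 1) ω + (1 - β₁) • g t ω)
    (hx : ∀ t, 1 ≤ t → ∀ ω (j : Fin d),
      x (t + 1) ω j = x t ω j - η * (softplus β (Real.sqrt (v t ω j)))⁻¹ * m t ω j)
    (hg_meas : ∀ t, Measurable[𝓕 t] (g t)) (hv_meas : ∀ t, Measurable[𝓕 t] (v t))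
    (hx_meas : ∀ t, 1 ≤ t → Measurable[𝓕 (t - 1)] (x t))
    (hcond : ∀ t, 1 ≤ t →
      MeasureTheory.condExp (𝓕 (t - 1)) volume (g t) =ᵐ[volume] fun ω => gradient f (x t ω))
    (hvar : ∀ t, 1 ≤ t → (∫ ω, ‖g t ω - gradient f (x t ω)‖ ^ 2) ≤ σ ^ 2)
    (hgb : ∀ t, 1 ≤ t → ∀ᵐ ω ∂volume, ‖g t ω‖ ^ 2 ≤ σ ^ 2 + G ^ 2)
    (hv0 : ∀ ω (j : Fin d), v 0 ω j = 0)
    (hvb : ∀ t, 1 ≤ t → ∀ᵐ ω ∂volume, ∀ j : Fin d,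
      0 ≤ v (t - 1) ω j ∧ v (t - 1) ω j ≤ v t ω j ∧ v t ω j ≤ σ ^ 2 + G ^ 2)
    (z : ℕ → Ω → EuclideanSpace ℝ (Fin d))
    (hz : ∀ t ω, z t ω = x t ω + (β₁ / (1 - β₁)) • (x t ω - x (t - 1) ω)) :
    ∀ t, 1 ≤ t →
      (∫ ω, ‖z (t + 1) ω - z t ω‖ ^ 2) ≤
        (2 * η ^ 2 * β₁ ^ 2 * (σ ^ 2 + G ^ 2) / (1 - β₁) ^ 2) *
            (∫ ω, ∑ j : Fin d,
              (((softplus β (Real.sqrt (v (t - 1) ω j)))⁻¹) ^ 2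
                - ((softplus β (Real.sqrt (v t ω j)))⁻¹) ^ 2))
        + 2 * η ^ 2 * (β / Real.log 2) ^ 2 * (σ ^ 2 + G ^ 2) := by
  
  intro t ht
  obtain ⟨n, rfl⟩ : ∃ n, t = n + 1 := ⟨t - 1, by omega⟩
  simp only [Nat.add_sub_cancel]
  set K := σ ^ 2 + G ^ 2 with hKdef
  have hK : 0 ≤ K := by positivity
  have h1β : (0:ℝ) < 1 - β₁ := by linarith
  have hμ : 0 < β / Real.log 2 := div_pos hβ (Real.log_pos (by norm_num))
  set μ := β / Real.log 2 with hμdef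
  -- coordinate step for x
  have hm0j : ∀ ω (j : Fin d), m 0 ω j = 0 := by intro ω j; rw [hm0]; rfl
  have hxstep : ∀ s ω (j : Fin d),
      x (s + 1) ω j = x s ω j - η * (softplus β (Real.sqrt (v s ω j)))⁻¹ * m s ω j := by
    intro s ω j
    match s with
    | 0 => rw [← hx0, hm0j]; ring
    | Nat.succ k => exact hx (k + 1) (by omega) ω j
  -- coordinate formula for z difference
  have hW : ∀ ω (j : Fin d), (z (n + 2) ω - z (n + 1) ω) j =
      η * β₁ / (1 - β₁) *
          ((softplus β (Real.sqrt (v n ω j)))⁻¹ - (softplus β (Real.sqrt (v (n + 1) ω j)))⁻¹) *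
          m n ω j
        - η * (softplus β (Real.sqrt (v (n + 1) ω j)))⁻¹ * g (n + 1) ω j := by
    intro ω j
    set a := (softplus β (Real.sqrt (v n ω j)))⁻¹ with hadef
    set b := (softplus β (Real.sqrt (v (n + 1) ω j)))⁻¹ with hbdef
    have hmc : m (n + 1) ω j = β₁ * m n ω j + (1 - β₁) * g (n + 1) ω j := by
      have := hm (n + 1) (by omega) ω
      rw [show m (n + 1) ω = β₁ • m n ω + (1 - β₁) • g (n + 1) ω by simpa using this]
      simp [PiLp.add_apply, PiLp.smul_apply, smul_eq_mul]
    have h2 : x (n + 2) ω j = x (n + 1) ω j - η * b * m (n + 1) ω j := hxstep (n + 1) ω j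
    have h1 : x (n + 1) ω j = x n ω j - η * a * m n ω j := hxstep n ω j
    have hzd : (z (n + 2) ω - z (n + 1) ω) j = z (n + 2) ω j - z (n + 1) ω j := by
      simp [PiLp.sub_apply]
    have hne : (1 : ℝ) - β₁ ≠ 0 := ne_of_gt h1β
    rw [hzd, hz (n + 2) ω, hz (n + 1) ω]
    simp only [Nat.add_sub_cancel, show n + 2 - 1 = n + 1 from rfl,
      PiLp.add_apply, PiLp.smul_apply, PiLp.sub_apply, smul_eq_mul]
    rw [h2, hmc, h1]
    field_simp
    ring
  -- norm squared as sum of squares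
  have hnorm : ∀ (y : EuclideanSpace ℝ (Fin d)), ‖y‖ ^ 2 = ∑ j, (y j) ^ 2 := by
    intro y
    rw [EuclideanSpace.norm_eq, Real.sq_sqrt (by positivity)]
    congr 1; ext j; rw [Real.norm_eq_abs, sq_abs]
  -- a.s. bound on m
  have hmb : ∀ s, ∀ᵐ ω ∂(volume : Measure Ω), ‖m s ω‖ ≤ Real.sqrt K := by
    intro s
    induction s with
    | zero =>
        filter_upwards with ω
        rw [hm0]; simpa using Real.sqrt_nonneg K
    | succ k ih =>
        filter_upwards [ih, hgb (k + 1) (by omega)] with ω h1 h2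
        have hgs : ‖g (k + 1) ω‖ ≤ Real.sqrt K :=
          calc ‖g (k + 1) ω‖ = Real.sqrt (‖g (k + 1) ω‖ ^ 2) :=
                (Real.sqrt_sq (norm_nonneg _)).symm
            _ ≤ Real.sqrt K := Real.sqrt_le_sqrt h2
        rw [hm (k + 1) (by omega)]
        simp only [Nat.add_sub_cancel]
        calc ‖β₁ • m k ω + (1 - β₁) • g (k + 1) ω‖
            ≤ ‖β₁ • m k ω‖ + ‖(1 - β₁) • g (k + 1) ω‖ := norm_add_le _ _
          _ = β₁ * ‖m k ω‖ + (1 - β₁) * ‖g (k + 1) ω‖ := by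
              rw [norm_smul, norm_smul, Real.norm_eq_abs, Real.norm_eq_abs,
                abs_of_nonneg hβ₁0, abs_of_nonneg h1β.le]
          _ ≤ β₁ * Real.sqrt K + (1 - β₁) * Real.sqrt K :=
              add_le_add (mul_le_mul_of_nonneg_left h1 hβ₁0)
                (mul_le_mul_of_nonneg_left hgs h1β.le)
          _ = Real.sqrt K := by ring
  -- the sum function S
  set S : Ω → ℝ := fun ω => ∑ j : Fin d,
      (((softplus β (Real.sqrt (v n ω j)))⁻¹) ^ 2
        - ((softplus β (Real.sqrt (v (n + 1) ω j)))⁻¹) ^ 2) with hSdef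
  have hAB : ∀ s ω (j : Fin d), 0 < (softplus β (Real.sqrt (v s ω j)))⁻¹ ∧
      (softplus β (Real.sqrt (v s ω j)))⁻¹ ≤ μ := fun s ω j =>
    ⟨inv_pos.2 (softplus_pos hβ _), inv_softplus_le hβ (Real.sqrt_nonneg _)⟩
  have hvj : ∀ s (j : Fin d), Measurable (fun ω => v s ω j) := by
    intro s j
    have h1 : Measurable (v s) := (hv_meas s).mono (h𝓕le s) le_rfl
    exact ((EuclideanSpace.proj j : EuclideanSpace ℝ (Fin d) →L[ℝ] ℝ).continuous.measurable).comp h1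
  have hSmeas : Measurable S := by
    apply Finset.measurable_sum
    intro j _
    exact (((continuous_softplus.comp Real.continuous_sqrt).measurable.comp (hvj n j)).inv.pow_const 2).sub
      (((continuous_softplus.comp Real.continuous_sqrt).measurable.comp (hvj (n + 1) j)).inv.pow_const 2)
  have hSbd : ∀ ω, |S ω| ≤ (d : ℝ) * μ ^ 2 := by
    intro ω
    calc |S ω| ≤ ∑ j : Fin d, |(((softplus β (Real.sqrt (v n ω j)))⁻¹) ^ 2
          - ((softplus β (Real.sqrt (v (n + 1) ω j)))⁻¹) ^ 2)| :=
          Finset.abs_sum_le_sum_abs _ _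
      _ ≤ ∑ _j : Fin d, μ ^ 2 := by
          apply Finset.sum_le_sum
          intro j _
          obtain ⟨ha0, haμ⟩ := hAB n ω j
          obtain ⟨hb0, hbμ⟩ := hAB (n + 1) ω j
          rw [abs_le]
          constructor <;> nlinarith
      _ = (d : ℝ) * μ ^ 2 := by simp [Finset.sum_const, Finset.card_univ]
  have hSint : Integrable S := by
    refine (integrable_const ((d : ℝ) * μ ^ 2)).mono' hSmeas.aestronglyMeasurable ?_
    filter_upwards with ω
    simpa [Real.norm_eq_abs] using hSbd ω
  -- pointwise a.e. bound
  have key : ∀ᵐ ω ∂(volume : Measure Ω), ‖z (n + 2) ω - z (n + 1) ω‖ ^ 2 ≤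
      (2 * η ^ 2 * β₁ ^ 2 * K / (1 - β₁) ^ 2) * S ω + 2 * η ^ 2 * μ ^ 2 * K := by
    filter_upwards [hmb n, hgb (n + 1) (by omega), hvb (n + 1) (by omega)] with ω hmω hgω hvω
    simp only [Nat.add_sub_cancel] at hvω
    have hm2 : ∀ j : Fin d, (m n ω j) ^ 2 ≤ K := by
      intro j
      have h1 : (m n ω j) ^ 2 ≤ ‖m n ω‖ ^ 2 := by
        rw [hnorm]
        exact Finset.single_le_sum (f := fun i => (m n ω i) ^ 2)
          (fun i _ => sq_nonneg _) (Finset.mem_univ j)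
      have h2 : ‖m n ω‖ ^ 2 ≤ Real.sqrt K ^ 2 :=
        pow_le_pow_left₀ (norm_nonneg _) hmω 2
      rw [Real.sq_sqrt hK] at h2
      linarith
    rw [hnorm]
    have hjb : ∀ j : Fin d, ((z (n + 2) ω - z (n + 1) ω) j) ^ 2 ≤
        2 * (η * β₁ / (1 - β₁)) ^ 2 * K *
          (((softplus β (Real.sqrt (v n ω j)))⁻¹) ^ 2
            - ((softplus β (Real.sqrt (v (n + 1) ω j)))⁻¹) ^ 2)
        + 2 * η ^ 2 * μ ^ 2 * (g (n + 1) ω j) ^ 2 := by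
      intro j
      rw [hW ω j]
      set a := (softplus β (Real.sqrt (v n ω j)))⁻¹ with hadef
      set b := (softplus β (Real.sqrt (v (n + 1) ω j)))⁻¹ with hbdef
      obtain ⟨ha0, haμ⟩ := hAB n ω j
      obtain ⟨hb0, hbμ⟩ := hAB (n + 1) ω j
      have hba : b ≤ a := by
        rw [hadef, hbdef]
        exact inv_anti₀ (softplus_pos hβ _)
          (softplus_mono hβ (Real.sqrt_le_sqrt (hvω j).2.1))
      set c := η * β₁ / (1 - β₁) with hcdef
      set M := m n ω j with hMdef
      set Gg := g (n + 1) ω j with hGdef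
      have hab : (a - b) ^ 2 * M ^ 2 ≤ (a ^ 2 - b ^ 2) * K :=
        mul_le_mul (by nlinarith) (hm2 j) (sq_nonneg _) (by nlinarith)
      have hbg : b ^ 2 * Gg ^ 2 ≤ μ ^ 2 * Gg ^ 2 :=
        mul_le_mul_of_nonneg_right (by nlinarith) (sq_nonneg _)
      calc (c * (a - b) * M - η * b * Gg) ^ 2
          ≤ 2 * (c * (a - b) * M) ^ 2 + 2 * (η * b * Gg) ^ 2 := by
            nlinarith [sq_nonneg (c * (a - b) * M + η * b * Gg)]
        _ = 2 * c ^ 2 * ((a - b) ^ 2 * M ^ 2) + 2 * η ^ 2 * (b ^ 2 * Gg ^ 2) := by ring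
        _ ≤ 2 * c ^ 2 * ((a ^ 2 - b ^ 2) * K) + 2 * η ^ 2 * (μ ^ 2 * Gg ^ 2) :=
            add_le_add (mul_le_mul_of_nonneg_left hab (by positivity))
              (mul_le_mul_of_nonneg_left hbg (by positivity))
        _ = 2 * c ^ 2 * K * (a ^ 2 - b ^ 2) + 2 * η ^ 2 * μ ^ 2 * Gg ^ 2 := by ring
    have hgsum : ∑ j : Fin d, (g (n + 1) ω j) ^ 2 ≤ K := by
      rw [← hnorm]; exact hgω
    calc ∑ j : Fin d, ((z (n + 2) ω - z (n + 1) ω) j) ^ 2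
        ≤ ∑ j : Fin d, (2 * (η * β₁ / (1 - β₁)) ^ 2 * K *
            (((softplus β (Real.sqrt (v n ω j)))⁻¹) ^ 2
              - ((softplus β (Real.sqrt (v (n + 1) ω j)))⁻¹) ^ 2)
            + 2 * η ^ 2 * μ ^ 2 * (g (n + 1) ω j) ^ 2) :=
          Finset.sum_le_sum (fun j _ => hjb j)
      _ = 2 * (η * β₁ / (1 - β₁)) ^ 2 * K * S ω
            + 2 * η ^ 2 * μ ^ 2 * ∑ j : Fin d, (g (n + 1) ω j) ^ 2 := by
          rw [Finset.sum_add_distrib, ← Finset.mul_sum, ← Finset.mul_sum]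
      _ ≤ 2 * (η * β₁ / (1 - β₁)) ^ 2 * K * S ω + 2 * η ^ 2 * μ ^ 2 * K :=
          add_le_add_right (mul_le_mul_of_nonneg_left hgsum (by positivity)) _
      _ = (2 * η ^ 2 * β₁ ^ 2 * K / (1 - β₁) ^ 2) * S ω + 2 * η ^ 2 * μ ^ 2 * K := by
          rw [div_pow]; ring
  -- assemble
  calc (∫ ω, ‖z (n + 1 + 1) ω - z (n + 1) ω‖ ^ 2)
      ≤ ∫ ω, ((2 * η ^ 2 * β₁ ^ 2 * K / (1 - β₁) ^ 2) * S ω + 2 * η ^ 2 * μ ^ 2 * K) := by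
        refine integral_mono_of_nonneg (Filter.Eventually.of_forall fun ω => sq_nonneg _)
          ((hSint.const_mul _).add (integrable_const _)) ?_
        exact key
    _ = (2 * η ^ 2 * β₁ ^ 2 * K / (1 - β₁) ^ 2) * (∫ ω, S ω) + 2 * η ^ 2 * μ ^ 2 * K := by
        rw [integral_add (hSint.const_mul _) (integrable_const _), integral_const_mul,
          integral_const]
        simp
    _ = (2 * η ^ 2 * β₁ ^ 2 * K / (1 - β₁) ^ 2) *
          (∫ ω, ∑ j : Fin d,
            (((softplus β (Real.sqrt (v n ω j)))⁻¹) ^ 2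
              - ((softplus β (Real.sqrt (v (n + 1) ω j)))⁻¹) ^ 2))
        + 2 * η ^ 2 * μ ^ 2 * K := by simp only [hSdef]
end

section
/- Under the Adam-type setup, define z_t = x_t + (β₁/(1−β₁))·(x_t − x_{t−1}). Then for every t ≥ 1: −E[⟨∇f(z_t) − ∇f(x_t), η·(√v_t + ε)^{−1} ⊙ g_t⟩] ≤ (1/2)·L²η²μ₂²·(β₁/(1−β₁))²·(σ²+G²) + (1/2)·η²μ₂²·(σ²+G²). (Inner-product bound for Adam.) -/
open MeasureTheory
open scoped RealInnerProductSpace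

private lemma coord_sq_bound (η ε vv r : ℝ) (hε : 0 < ε) (hv : 0 ≤ vv) :
    (η * (Real.sqrt vv + ε)⁻¹ * r) ^ 2 ≤ η ^ 2 * ε⁻¹ ^ 2 * r ^ 2 := by
  have hs : 0 ≤ Real.sqrt vv := Real.sqrt_nonneg vv
  have h1 : (Real.sqrt vv + ε)⁻¹ ≤ ε⁻¹ := by
    apply inv_anti₀ hε; linarith
  have h2 : 0 ≤ (Real.sqrt vv + ε)⁻¹ := by positivity
  have h3 : (Real.sqrt vv + ε)⁻¹ ^ 2 ≤ ε⁻¹ ^ 2 := by nlinarith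
  nlinarith [sq_nonneg (η * r), sq_nonneg r, sq_nonneg η]

set_option maxHeartbeats 1000000 in
/-- **Inner-product bound for Adam.**
Under the Adam-type setup, with `z t = x t + (β₁/(1-β₁)) • (x t − x (t-1))`,
`μ₂ = 1/ε`, for every `t ≥ 1`:
`−E[⟪∇f(z t) − ∇f(x t), η·(√(v t)+ε)⁻¹ ⊙ g t⟫] ≤
  (1/2)L²η²μ₂²(β₁/(1−β₁))²(σ²+G²) + (1/2)η²μ₂²(σ²+G²)`. -/
theorem adam_inner_product_bound
    {Ω : Type*} [MeasureSpace Ω] [MeasureTheory.IsProbabilityMeasure (volume : Measure Ω)]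
    {d : ℕ} (hd : 1 ≤ d)
    (𝓕 : ℕ → MeasurableSpace Ω) (h𝓕mono : Monotone 𝓕)
    (h𝓕le : ∀ t, 𝓕 t ≤ (inferInstance : MeasurableSpace Ω))
    (f : EuclideanSpace ℝ (Fin d) → ℝ) (L G σ ε η β₁ fstar : ℝ)
    (hf : Differentiable ℝ f)
    (hLip : ∀ a b : EuclideanSpace ℝ (Fin d), ‖gradient f a - gradient f b‖ ≤ L * ‖a - b‖)
    (hGrad : ∀ a : EuclideanSpace ℝ (Fin d), ‖gradient f a‖ ≤ G)
    (hfstar_le : ∀ a, fstar ≤ f a) (hfstar_attained : ∃ a, f a = fstar)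
    (hε : 0 < ε) (hη : 0 < η) (hβ₁0 : 0 ≤ β₁) (hβ₁1 : β₁ < 1)
    (x m v g : ℕ → Ω → EuclideanSpace ℝ (Fin d))
    (x₁ : EuclideanSpace ℝ (Fin d))
    (hx1 : ∀ ω, x 1 ω = x₁) (hx0 : x 0 = x 1) (hm0 : ∀ ω, m 0 ω = 0)
    (hm : ∀ t, 1 ≤ t → ∀ ω, m t ω = β₁ • m (t - 1) ω + (1 - β₁) • g t ω)
    (hx : ∀ t, 1 ≤ t → ∀ ω (j : Fin d),
      x (t + 1) ω j = x t ω j - η * (Real.sqrt (v t ω j) + ε)⁻¹ * m t ω j)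
    (hg_meas : ∀ t, Measurable[𝓕 t] (g t)) (hv_meas : ∀ t, Measurable[𝓕 t] (v t))
    (hx_meas : ∀ t, 1 ≤ t → Measurable[𝓕 (t - 1)] (x t))
    (hcond : ∀ t, 1 ≤ t →
      MeasureTheory.condExp (𝓕 (t - 1)) volume (g t) =ᵐ[volume] fun ω => gradient f (x t ω))
    (hvar : ∀ t, 1 ≤ t → (∫ ω, ‖g t ω - gradient f (x t ω)‖ ^ 2) ≤ σ ^ 2)
    (hgb : ∀ t, 1 ≤ t → ∀ᵐ ω ∂volume, ‖g t ω‖ ^ 2 ≤ σ ^ 2 + G ^ 2)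
    (hv0 : ∀ ω (j : Fin d), v 0 ω j = 0)
    (hvb : ∀ t, 1 ≤ t → ∀ᵐ ω ∂volume, ∀ j : Fin d,
      0 ≤ v (t - 1) ω j ∧ v (t - 1) ω j ≤ v t ω j ∧ v t ω j ≤ σ ^ 2 + G ^ 2)
    (z : ℕ → Ω → EuclideanSpace ℝ (Fin d))
    (hz : ∀ t ω, z t ω = x t ω + (β₁ / (1 - β₁)) • (x t ω - x (t - 1) ω)) :
    ∀ t, 1 ≤ t →
      -(∫ ω, ⟪gradient f (z t ω) - gradient f (x t ω),
          (WithLp.toLp 2 (fun j : Fin d => η * (Real.sqrt (v t ω j) + ε)⁻¹ * g t ω j) :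
            EuclideanSpace ℝ (Fin d))⟫) ≤
        (1 / 2) * L ^ 2 * η ^ 2 * (ε⁻¹) ^ 2 * (β₁ / (1 - β₁)) ^ 2 * (σ ^ 2 + G ^ 2)
          + (1 / 2) * η ^ 2 * (ε⁻¹) ^ 2 * (σ ^ 2 + G ^ 2) := by
  intro t ht
  set K : ℝ := σ ^ 2 + G ^ 2 with hKdef
  have hK0 : 0 ≤ K := by positivity
  set A : ℝ := β₁ / (1 - β₁) with hAdef
  have hA0 : 0 ≤ A := div_nonneg hβ₁0 (by linarith)
  set C : ℝ := (1 / 2) * L ^ 2 * η ^ 2 * (ε⁻¹) ^ 2 * A ^ 2 * K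
      + (1 / 2) * η ^ 2 * (ε⁻¹) ^ 2 * K with hCdef
  have hC0 : 0 ≤ C := by positivity
  set h : Ω → ℝ := fun ω => ⟪gradient f (z t ω) - gradient f (x t ω),
      (WithLp.toLp 2 (fun j : Fin d => η * (Real.sqrt (v t ω j) + ε)⁻¹ * g t ω j) :
        EuclideanSpace ℝ (Fin d))⟫ with hhdef
  -- a.e. bound on all g s
  have hGall : ∀ᵐ ω ∂volume, ∀ s : ℕ, 1 ≤ s → ‖g s ω‖ ^ 2 ≤ K := by
    rw [MeasureTheory.ae_all_iff]
    intro s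
    by_cases hs : 1 ≤ s
    · filter_upwards [hgb s hs] with ω hω _; exact hω
    · filter_upwards with ω hω; omega
  -- the pointwise estimate
  have hpt : ∀ᵐ ω ∂volume, -h ω ≤ C := by
    filter_upwards [hGall, hvb t ht] with ω hgω hvω
    -- bound on ‖m s ω‖
    have hmb : ∀ s, ‖m s ω‖ ≤ Real.sqrt K := by
      intro s
      induction s with
      | zero => simp [hm0 ω, Real.sqrt_nonneg]
      | succ n ih =>
        rw [hm (n + 1) (by omega) ω]
        simp only [Nat.add_sub_cancel]
        have hgn : ‖g (n + 1) ω‖ ≤ Real.sqrt K := by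
          have h1 := hgω (n + 1) (by omega)
          nlinarith [Real.sq_sqrt hK0, Real.sqrt_nonneg K, norm_nonneg (g (n + 1) ω)]
        calc ‖β₁ • m n ω + (1 - β₁) • g (n + 1) ω‖
            ≤ ‖β₁ • m n ω‖ + ‖(1 - β₁) • g (n + 1) ω‖ := norm_add_le _ _
          _ = β₁ * ‖m n ω‖ + (1 - β₁) * ‖g (n + 1) ω‖ := by
              rw [norm_smul, norm_smul, Real.norm_eq_abs, Real.norm_eq_abs,
                abs_of_nonneg hβ₁0, abs_of_nonneg (by linarith : (0:ℝ) ≤ 1 - β₁)]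
          _ ≤ β₁ * Real.sqrt K + (1 - β₁) * Real.sqrt K := by
              gcongr <;> linarith
          _ = Real.sqrt K := by ring
    -- bound on ‖x t ω - x (t-1) ω‖²
    have hxdiff : ‖x t ω - x (t - 1) ω‖ ^ 2 ≤ η ^ 2 * ε⁻¹ ^ 2 * K := by
      rcases eq_or_lt_of_le ht with h1 | h2
      · have : x t ω - x (t - 1) ω = 0 := by
          rw [← h1]; simp [hx0]
        rw [this]; simp; positivity
      · have ht2 : 2 ≤ t := h2
        have hxeq : ∀ j : Fin d, x t ω j - x (t - 1) ω j
            = -(η * (Real.sqrt (v (t - 1) ω j) + ε)⁻¹ * m (t - 1) ω j) := by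
          intro j
          have := hx (t - 1) (by omega) ω j
          rw [show t - 1 + 1 = t by omega] at this
          linarith
        have hm2 : ‖m (t - 1) ω‖ ^ 2 ≤ K := by
          have := hmb (t - 1)
          nlinarith [Real.sq_sqrt hK0, norm_nonneg (m (t - 1) ω), Real.sqrt_nonneg K]
        calc ‖x t ω - x (t - 1) ω‖ ^ 2
            = ∑ j, (x t ω j - x (t - 1) ω j) ^ 2 := by
              rw [euclid_norm_sq]; rfl
          _ ≤ ∑ j, η ^ 2 * ε⁻¹ ^ 2 * (m (t - 1) ω j) ^ 2 := by
              apply Finset.sum_le_sum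
              intro j _
              rw [hxeq j, neg_sq]
              exact coord_sq_bound η ε _ _ hε (hvω j).1
          _ = η ^ 2 * ε⁻¹ ^ 2 * ‖m (t - 1) ω‖ ^ 2 := by
              rw [euclid_norm_sq, Finset.mul_sum]
          _ ≤ η ^ 2 * ε⁻¹ ^ 2 * K := by gcongr
    -- bound on the second vector
    set b : EuclideanSpace ℝ (Fin d) :=
      WithLp.toLp 2 (fun j : Fin d => η * (Real.sqrt (v t ω j) + ε)⁻¹ * g t ω j) with hbdef
    have hb2 : ‖b‖ ^ 2 ≤ η ^ 2 * ε⁻¹ ^ 2 * K := by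
      calc ‖b‖ ^ 2 = ∑ j, (η * (Real.sqrt (v t ω j) + ε)⁻¹ * g t ω j) ^ 2 := by
            rw [euclid_norm_sq]
        _ ≤ ∑ j, η ^ 2 * ε⁻¹ ^ 2 * (g t ω j) ^ 2 := by
            apply Finset.sum_le_sum
            intro j _
            exact coord_sq_bound η ε _ _ hε (le_trans (hvω j).1 (hvω j).2.1)
        _ = η ^ 2 * ε⁻¹ ^ 2 * ‖g t ω‖ ^ 2 := by
            rw [euclid_norm_sq, Finset.mul_sum]
        _ ≤ η ^ 2 * ε⁻¹ ^ 2 * K := by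
            gcongr; exact hgω t ht
    -- bound on the first vector
    set a : EuclideanSpace ℝ (Fin d) := gradient f (z t ω) - gradient f (x t ω) with hadef
    have ha : ‖a‖ ≤ L * (A * ‖x t ω - x (t - 1) ω‖) := by
      have hza : z t ω - x t ω = A • (x t ω - x (t - 1) ω) := by
        rw [hz t ω]; abel
      have := hLip (z t ω) (x t ω)
      rw [hza, norm_smul, Real.norm_eq_abs, abs_of_nonneg hA0] at this
      exact this
    have ha2 : ‖a‖ ^ 2 ≤ L ^ 2 * A ^ 2 * (η ^ 2 * ε⁻¹ ^ 2 * K) := by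
      have h0 : 0 ≤ ‖a‖ := norm_nonneg a
      have h1 : ‖a‖ ^ 2 ≤ (L * (A * ‖x t ω - x (t - 1) ω‖)) ^ 2 := by nlinarith
      have h2 : (L * (A * ‖x t ω - x (t - 1) ω‖)) ^ 2
          = L ^ 2 * A ^ 2 * ‖x t ω - x (t - 1) ω‖ ^ 2 := by ring
      nlinarith [sq_nonneg (L * A)]
    -- combine
    have hinner : -h ω ≤ ‖a‖ * ‖b‖ := by
      have := abs_real_inner_le_norm a b
      have heq : h ω = ⟪a, b⟫ := rfl
      cases abs_cases (⟪a, b⟫ : ℝ) with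
      | inl hc => rw [heq]; linarith [hc.1, this]
      | inr hc => rw [heq]; linarith [hc.1, this]
    have hab : ‖a‖ * ‖b‖ ≤ (1 / 2) * ‖a‖ ^ 2 + (1 / 2) * ‖b‖ ^ 2 := by
      nlinarith [sq_nonneg (‖a‖ - ‖b‖)]
    rw [hCdef]
    nlinarith [ha2, hb2, hab, hinner]
  -- from pointwise to integral
  by_cases hi : Integrable h volume
  · rw [← MeasureTheory.integral_neg]
    refine le_trans (integral_mono_ae hi.neg (integrable_const C) hpt) ?_
    simp
  · rw [integral_undef hi]
    simpa using hC0
end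

section
/- Under the Sadam-type setup, define z_t = x_t + (β₁/(1−β₁))·(x_t − x_{t−1}). Then for every t ≥ 1: −E[⟨∇f(z_t) − ∇f(x_t), η·softplus_β(√v_t)^{−1} ⊙ g_t⟩] ≤ (1/2)·L²η²μ₄²·(β₁/(1−β₁))²·(σ²+G²) + (1/2)·η²μ₄²·(σ²+G²). (Inner-product bound for Sadam.) -/
open MeasureTheory
open scoped RealInnerProductSpace

lemma softplus_inv_pos {β x : ℝ} (hβ : 0 < β) (hx : 0 ≤ x) :
    0 < (softplus β x)⁻¹ ∧ (softplus β x)⁻¹ ≤ β / Real.log 2 := by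
  have h2 : (0:ℝ) < Real.log 2 := Real.log_pos (by norm_num)
  have hlow : β⁻¹ * Real.log 2 ≤ softplus β x := by
    unfold softplus
    have : (2:ℝ) ≤ 1 + Real.exp (β * x) := by
      have := Real.one_le_exp (mul_nonneg hβ.le hx); linarith
    have := Real.log_le_log (by norm_num) this
    exact mul_le_mul_of_nonneg_left this (inv_nonneg.mpr hβ.le)
  have hpos : 0 < softplus β x :=
    lt_of_lt_of_le (mul_pos (inv_pos.mpr hβ) h2) hlow
  refine ⟨inv_pos.mpr hpos, ?_⟩
  have := inv_anti₀ (mul_pos (inv_pos.mpr hβ) h2) hlow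
  calc (softplus β x)⁻¹ ≤ (β⁻¹ * Real.log 2)⁻¹ := this
    _ = β / Real.log 2 := by rw [mul_inv, inv_inv, div_eq_mul_inv]

lemma coord_le {d : ℕ} (y w : EuclideanSpace ℝ (Fin d)) (c : ℝ) (hc : 0 ≤ c)
    (h : ∀ j, |y j| ≤ c * |w j|) : ‖y‖ ≤ c * ‖w‖ := by
  rw [EuclideanSpace.norm_eq, EuclideanSpace.norm_eq]
  rw [show c * Real.sqrt (∑ j, ‖w j‖^2) = Real.sqrt (c^2 * ∑ j, ‖w j‖^2) by
    rw [Real.sqrt_mul (sq_nonneg c), Real.sqrt_sq hc]]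
  apply Real.sqrt_le_sqrt
  rw [Finset.mul_sum]
  apply Finset.sum_le_sum
  intro j _
  have hj := h j
  simp only [Real.norm_eq_abs]
  nlinarith [abs_nonneg (y j), abs_nonneg (w j)]

set_option maxHeartbeats 1000000 in
/-- **Inner-product bound for Sadam.**
Under the Sadam-type setup, with `z t = x t + (β₁/(1-β₁)) • (x t − x (t-1))`,
`μ₄ = β/log 2`, for every `t ≥ 1`:
`−E[⟪∇f(z t) − ∇f(x t), η·softplus_β(√(v t))⁻¹ ⊙ g t⟫] ≤
  (1/2)L²η²μ₄²(β₁/(1−β₁))²(σ²+G²) + (1/2)η²μ₄²(σ²+G²)`. -/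
theorem sadam_inner_product_bound
    {Ω : Type*} [MeasureSpace Ω] [MeasureTheory.IsProbabilityMeasure (volume : Measure Ω)]
    {d : ℕ} (hd : 1 ≤ d)
    (𝓕 : ℕ → MeasurableSpace Ω) (h𝓕mono : Monotone 𝓕)
    (h𝓕le : ∀ t, 𝓕 t ≤ (inferInstance : MeasurableSpace Ω))
    (f : EuclideanSpace ℝ (Fin d) → ℝ) (L G σ β η β₁ fstar : ℝ)
    (hf : Differentiable ℝ f)
    (hLip : ∀ a b : EuclideanSpace ℝ (Fin d), ‖gradient f a - gradient f b‖ ≤ L * ‖a - b‖)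
    (hGrad : ∀ a : EuclideanSpace ℝ (Fin d), ‖gradient f a‖ ≤ G)
    (hfstar_le : ∀ a, fstar ≤ f a) (hfstar_attained : ∃ a, f a = fstar)
    (hβ : 0 < β) (hη : 0 < η) (hβ₁0 : 0 ≤ β₁) (hβ₁1 : β₁ < 1)
    (x m v g : ℕ → Ω → EuclideanSpace ℝ (Fin d))
    (x₁ : EuclideanSpace ℝ (Fin d))
    (hx1 : ∀ ω, x 1 ω = x₁) (hx0 : x 0 = x 1) (hm0 : ∀ ω, m 0 ω = 0)
    (hm : ∀ t, 1 ≤ t → ∀ ω, m t ω = β₁ • m (t - 1) ω + (1 - β₁) • g t ω)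
    (hx : ∀ t, 1 ≤ t → ∀ ω (j : Fin d),
      x (t + 1) ω j = x t ω j - η * (softplus β (Real.sqrt (v t ω j)))⁻¹ * m t ω j)
    (hg_meas : ∀ t, Measurable[𝓕 t] (g t)) (hv_meas : ∀ t, Measurable[𝓕 t] (v t))
    (hx_meas : ∀ t, 1 ≤ t → Measurable[𝓕 (t - 1)] (x t))
    (hcond : ∀ t, 1 ≤ t →
      MeasureTheory.condExp (𝓕 (t - 1)) volume (g t) =ᵐ[volume] fun ω => gradient f (x t ω))
    (hvar : ∀ t, 1 ≤ t → (∫ ω, ‖g t ω - gradient f (x t ω)‖ ^ 2) ≤ σ ^ 2)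
    (hgb : ∀ t, 1 ≤ t → ∀ᵐ ω ∂volume, ‖g t ω‖ ^ 2 ≤ σ ^ 2 + G ^ 2)
    (hv0 : ∀ ω (j : Fin d), v 0 ω j = 0)
    (hvb : ∀ t, 1 ≤ t → ∀ᵐ ω ∂volume, ∀ j : Fin d,
      0 ≤ v (t - 1) ω j ∧ v (t - 1) ω j ≤ v t ω j ∧ v t ω j ≤ σ ^ 2 + G ^ 2)
    (z : ℕ → Ω → EuclideanSpace ℝ (Fin d))
    (hz : ∀ t ω, z t ω = x t ω + (β₁ / (1 - β₁)) • (x t ω - x (t - 1) ω)) :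
    ∀ t, 1 ≤ t →
      -(∫ ω, ⟪gradient f (z t ω) - gradient f (x t ω),
          (WithLp.toLp 2 fun j : Fin d => η * (softplus β (Real.sqrt (v t ω j)))⁻¹ * g t ω j :
            EuclideanSpace ℝ (Fin d))⟫) ≤
        (1 / 2) * L ^ 2 * η ^ 2 * (β / Real.log 2) ^ 2 * (β₁ / (1 - β₁)) ^ 2 * (σ ^ 2 + G ^ 2)
          + (1 / 2) * η ^ 2 * (β / Real.log 2) ^ 2 * (σ ^ 2 + G ^ 2) := by
  intro t ht
  have hβ₁' : 0 < 1 - β₁ := by linarith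
  set μ := β / Real.log 2 with hμdef
  have hμ : 0 < μ := div_pos hβ (Real.log_pos (by norm_num))
  set K := Real.sqrt (σ ^ 2 + G ^ 2) with hKdef
  have hK0 : 0 ≤ K := Real.sqrt_nonneg _
  have hKsq : K ^ 2 = σ ^ 2 + G ^ 2 := Real.sq_sqrt (by positivity)
  have hr : 0 ≤ β₁ / (1 - β₁) := div_nonneg hβ₁0 hβ₁'.le
  set r := β₁ / (1 - β₁) with hrdef
  -- L ≥ 0
  have hL : 0 ≤ L := by
    have h1 := hLip (EuclideanSpace.single (⟨0, hd⟩ : Fin d) (1:ℝ)) 0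
    have h2 : ‖(EuclideanSpace.single (⟨0, hd⟩ : Fin d) (1:ℝ)) - 0‖ = 1 := by
      simp [EuclideanSpace.norm_single]
    rw [h2, mul_one] at h1
    exact le_trans (norm_nonneg _) h1
  -- a.s. bound on ‖m s‖
  have hmb : ∀ s : ℕ, ∀ᵐ ω ∂volume, ‖m s ω‖ ≤ K := by
    intro s
    induction s with
    | zero => filter_upwards with ω; simp [hm0 ω, hK0]
    | succ n ih =>
      filter_upwards [ih, hgb (n + 1) (Nat.le_add_left 1 n)] with ω h1 h2
      have hgK : ‖g (n + 1) ω‖ ≤ K := by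
        rw [show ‖g (n+1) ω‖ = Real.sqrt (‖g (n+1) ω‖ ^ 2) from
          (Real.sqrt_sq (norm_nonneg _)).symm]
        exact Real.sqrt_le_sqrt h2
      rw [hm (n + 1) (Nat.le_add_left 1 n)]
      simp only [Nat.add_sub_cancel]
      calc ‖β₁ • m n ω + (1 - β₁) • g (n+1) ω‖
          ≤ ‖β₁ • m n ω‖ + ‖(1 - β₁) • g (n+1) ω‖ := norm_add_le _ _
        _ = β₁ * ‖m n ω‖ + (1 - β₁) * ‖g (n+1) ω‖ := by
            rw [norm_smul, norm_smul, Real.norm_eq_abs, Real.norm_eq_abs,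
              abs_of_nonneg hβ₁0, abs_of_nonneg hβ₁'.le]
        _ ≤ β₁ * K + (1 - β₁) * K := by
            gcongr
        _ = K := by ring
  -- RHS nonneg
  have hC : 0 ≤ (1 / 2) * L ^ 2 * η ^ 2 * μ ^ 2 * r ^ 2 * (σ ^ 2 + G ^ 2)
      + (1 / 2) * η ^ 2 * μ ^ 2 * (σ ^ 2 + G ^ 2) := by positivity
  set C := (1 / 2) * L ^ 2 * η ^ 2 * μ ^ 2 * r ^ 2 * (σ ^ 2 + G ^ 2)
      + (1 / 2) * η ^ 2 * μ ^ 2 * (σ ^ 2 + G ^ 2) with hCdef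
  set φ : Ω → ℝ := fun ω => ⟪gradient f (z t ω) - gradient f (x t ω),
      (WithLp.toLp 2 fun j : Fin d => η * (softplus β (Real.sqrt (v t ω j)))⁻¹ * g t ω j :
        EuclideanSpace ℝ (Fin d))⟫ with hφdef
  -- pointwise a.e. bound : -φ ω ≤ C
  have hae : ∀ᵐ ω ∂volume, -φ ω ≤ C := by
    filter_upwards [hvb t ht, hgb t ht, hmb (t - 1)] with ω hv1 hg1 hm1
    have hgK : ‖g t ω‖ ≤ K := by
      rw [show ‖g t ω‖ = Real.sqrt (‖g t ω‖ ^ 2) from (Real.sqrt_sq (norm_nonneg _)).symm]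
      exact Real.sqrt_le_sqrt hg1
    -- bound on b
    set b : EuclideanSpace ℝ (Fin d) :=
      (WithLp.toLp 2 fun j : Fin d => η * (softplus β (Real.sqrt (v t ω j)))⁻¹ * g t ω j) with hbdef
    have hb : ‖b‖ ≤ η * μ * K := by
      have h1 : ‖b‖ ≤ (η * μ) * ‖g t ω‖ := by
        apply coord_le _ _ _ (by positivity)
        intro j
        have hvj : 0 ≤ v t ω j := le_trans (hv1 j).1 (hv1 j).2.1
        obtain ⟨hsp, hs⟩ := softplus_inv_pos hβ (Real.sqrt_nonneg (v t ω j))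
        rw [← hμdef] at hs
        have habs : |b j| = η * (softplus β (Real.sqrt (v t ω j)))⁻¹ * |g t ω j| := by
          rw [hbdef]
          simp only [PiLp.toLp_apply]
          rw [abs_mul, abs_mul, abs_of_pos hη, abs_of_pos hsp]
        rw [habs]
        calc η * (softplus β (Real.sqrt (v t ω j)))⁻¹ * |g t ω j|
            = η * ((softplus β (Real.sqrt (v t ω j)))⁻¹ * |g t ω j|) := by ring
          _ ≤ η * (μ * |g t ω j|) :=
              mul_le_mul_of_nonneg_left
                (mul_le_mul_of_nonneg_right hs (abs_nonneg _)) hη.le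
          _ = η * μ * |g t ω j| := by ring
      calc ‖b‖ ≤ (η * μ) * ‖g t ω‖ := h1
        _ ≤ (η * μ) * K := mul_le_mul_of_nonneg_left hgK (by positivity)
        _ = η * μ * K := by ring
    -- bound on x t - x (t-1)
    have hΔ : ‖x t ω - x (t - 1) ω‖ ≤ η * μ * K := by
      rcases Nat.lt_or_ge t 2 with h2 | h2
      · interval_cases t
        · simp [hx0]
          positivity
      · obtain ⟨s, rfl⟩ : ∃ s, t = s + 1 := ⟨t - 1, (Nat.succ_pred_eq_of_pos (by omega)).symm⟩
        have hs1 : 1 ≤ s := by omega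
        simp only [Nat.add_sub_cancel]
        have h1 : ‖x (s + 1) ω - x s ω‖ ≤ (η * μ) * ‖m s ω‖ := by
          apply coord_le _ _ _ (by positivity)
          intro j
          have hvj : 0 ≤ v s ω j := (hv1 j).1
          obtain ⟨hsp, hs'⟩ := softplus_inv_pos hβ (Real.sqrt_nonneg (v s ω j))
          have hdiff : (x (s + 1) ω - x s ω) j =
              -(η * (softplus β (Real.sqrt (v s ω j)))⁻¹ * m s ω j) := by
            have := hx s hs1 ω j
            simp only [PiLp.sub_apply]
            rw [this]; ring
          rw [← hμdef] at hs'
          rw [hdiff, abs_neg, abs_mul, abs_mul, abs_of_pos hη, abs_of_pos hsp]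
          calc η * (softplus β (Real.sqrt (v s ω j)))⁻¹ * |m s ω j|
              = η * ((softplus β (Real.sqrt (v s ω j)))⁻¹ * |m s ω j|) := by ring
            _ ≤ η * (μ * |m s ω j|) :=
                mul_le_mul_of_nonneg_left
                  (mul_le_mul_of_nonneg_right hs' (abs_nonneg _)) hη.le
            _ = η * μ * |m s ω j| := by ring
        calc ‖x (s + 1) ω - x s ω‖ ≤ (η * μ) * ‖m s ω‖ := h1
          _ ≤ (η * μ) * K := by
              apply mul_le_mul_of_nonneg_left _ (by positivity)
              simpa using hm1
          _ = η * μ * K := by ring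
    -- bound on a
    have hzx : z t ω - x t ω = r • (x t ω - x (t - 1) ω) := by
      rw [hz t ω]; abel
    have ha : ‖gradient f (z t ω) - gradient f (x t ω)‖ ≤ L * (r * (η * μ * K)) := by
      calc ‖gradient f (z t ω) - gradient f (x t ω)‖ ≤ L * ‖z t ω - x t ω‖ := hLip _ _
        _ = L * (r * ‖x t ω - x (t - 1) ω‖) := by
            rw [hzx, norm_smul, Real.norm_eq_abs, abs_of_nonneg hr]
        _ ≤ L * (r * (η * μ * K)) := by gcongr
    have hip : -φ ω ≤ ‖gradient f (z t ω) - gradient f (x t ω)‖ * ‖b‖ := by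
      have := abs_real_inner_le_norm (gradient f (z t ω) - gradient f (x t ω)) b
      have h2 : -φ ω ≤ |φ ω| := neg_le_abs _
      exact le_trans h2 this
    have hna := norm_nonneg (gradient f (z t ω) - gradient f (x t ω))
    have hnb := norm_nonneg b
    have hA : (0:ℝ) ≤ L * (r * (η * μ * K)) := by positivity
    have hB : (0:ℝ) ≤ η * μ * K := by positivity
    have key : ‖gradient f (z t ω) - gradient f (x t ω)‖ * ‖b‖ ≤
        (1/2) * (L * (r * (η * μ * K)))^2 + (1/2) * (η * μ * K)^2 := by
      nlinarith [sq_nonneg (L * (r * (η * μ * K)) - η * μ * K),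
        mul_le_mul ha hb hnb hA]
    have : (1/2) * (L * (r * (η * μ * K)))^2 + (1/2) * (η * μ * K)^2 = C := by
      rw [hCdef, ← hKsq]; ring
    exact le_trans (le_trans hip key) this.le
  -- conclude via integral
  show -(∫ ω, φ ω) ≤ C
  by_cases hInt : Integrable φ
  · rw [← integral_neg]
    calc (∫ ω, -φ ω) ≤ ∫ _ω, C := integral_mono_ae hInt.neg (integrable_const C) hae
      _ = C := by simp
  · rw [integral_undef hInt, neg_zero]; exact hC
end
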